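/- arXiv:2110.10762 — 3 statements merged into one kernel-verified Lean document; each statement's English description precedes it below -/
import Mathlib

section
/- Under the linear Parareal scheme λ₀^{k+1} = λ₀^k, λ_i^{k+1} = 𝒢 λ_{i-1}^{k+1} + (ℱ - 𝒢) λ_{i-1}^k + ζ for i = 1,…,p, with fixed point λ*, the maximum error satisfies ‖λ^k - λ*‖_∞ ≤ α^k ‖λ^0 - λ*‖_∞ where α = ((1 - θ^p)/(1 - θ)) ‖ℱ - 𝒢‖ for any θ ≥ ‖𝒢‖ with θ ≠ 1. -/
/-- Error bound for the linear (synchronous) Parareal scheme: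
`‖λ^k - λ*‖_∞ ≤ α^k ‖λ^0 - λ*‖_∞` with `α = ((1 - θ^p)/(1 - θ)) ‖F - G‖`,
for any `θ ≥ ‖G‖`, `θ ≠ 1`. -/
theorem stmt2 {X : Type*} [NormedAddCommGroup X] [NormedSpace ℝ X]
    (G F : X →L[ℝ] X) (ζ : X) (p : ℕ)
    (lam : ℕ → ℕ → X) (lamS : ℕ → X)
    (h0 : ∀ k, lam (k + 1) 0 = lam k 0)
    (hrec : ∀ k, ∀ i, 1 ≤ i → i ≤ p →
      lam (k + 1) i = G (lam (k + 1) (i - 1)) + (F - G) (lam k (i - 1)) + ζ)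
    (hS0 : lamS 0 = lam 0 0)
    (hSrec : ∀ i, 1 ≤ i → i ≤ p → lamS i = F (lamS (i - 1)) + ζ)
    (θ : ℝ) (hθ : ‖G‖ ≤ θ) (hθ1 : θ ≠ 1)
    (α : ℝ) (hα : α = ((1 - θ ^ p) / (1 - θ)) * ‖F - G‖) :
    ∀ k, (⨆ i : Fin (p + 1), ‖lam k i - lamS i‖) ≤
      α ^ k * ⨆ i : Fin (p + 1), ‖lam 0 i - lamS i‖ := by
  set C := ‖F - G‖ with hC
  have hC0 : 0 ≤ C := norm_nonneg _
  have hθ0 : 0 ≤ θ := le_trans (norm_nonneg G) hθ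
  have hαS : α = (∑ j ∈ Finset.range p, θ ^ j) * C := by
    rw [hα, geom_sum_eq hθ1]
    have h1θ : (1:ℝ) - θ ≠ 0 := sub_ne_zero.mpr hθ1.symm
    have h1θ' : θ - 1 ≠ 0 := sub_ne_zero.mpr hθ1
    field_simp
    ring
  have hSnn : ∀ n, 0 ≤ ∑ j ∈ Finset.range n, θ ^ j :=
    fun n => Finset.sum_nonneg fun j _ => pow_nonneg hθ0 j
  have hα0 : 0 ≤ α := by rw [hαS]; exact mul_nonneg (hSnn p) hC0
  set E : ℕ → ℝ := fun k => ⨆ i : Fin (p + 1), ‖lam k i - lamS i‖ with hE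
  have hEb : ∀ k, ∀ i : Fin (p + 1), ‖lam k (i : ℕ) - lamS (i : ℕ)‖ ≤ E k := by
    intro k i
    exact le_ciSup (Set.Finite.bddAbove (Set.finite_range
      (fun j : Fin (p + 1) => ‖lam k (j : ℕ) - lamS (j : ℕ)‖))) i
  have hE0 : ∀ k, 0 ≤ E k := fun k => le_trans (norm_nonneg _) (hEb k 0)
  have hdiff0 : ∀ k, lam k 0 = lam 0 0 := by
    intro k
    induction k with
    | zero => rfl
    | succ n ih => rw [h0, ih]
  have hstep : ∀ k, ∀ i, i ≤ p →
      ‖lam (k + 1) i - lamS i‖ ≤ (∑ j ∈ Finset.range i, θ ^ j) * C * E k := by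
    intro k i
    induction i with
    | zero =>
      intro _
      simp [hdiff0, hS0]
    | succ i ih =>
      intro hi
      have hi' : i ≤ p := Nat.le_of_succ_le hi
      have hrw : lam (k + 1) (i + 1) - lamS (i + 1)
          = G (lam (k + 1) i - lamS i) + (F - G) (lam k i - lamS i) := by
        rw [hrec k (i + 1) (Nat.succ_le_succ (Nat.zero_le i)) hi,
          hSrec (i + 1) (Nat.succ_le_succ (Nat.zero_le i)) hi]
        simp only [Nat.add_sub_cancel, map_sub, ContinuousLinearMap.sub_apply]
        abel
      have hb : ‖lam k i - lamS i‖ ≤ E k := hEb k ⟨i, Nat.lt_succ_of_le hi'⟩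
      calc ‖lam (k + 1) (i + 1) - lamS (i + 1)‖
          = ‖G (lam (k + 1) i - lamS i) + (F - G) (lam k i - lamS i)‖ := by rw [hrw]
        _ ≤ ‖G (lam (k + 1) i - lamS i)‖ + ‖(F - G) (lam k i - lamS i)‖ :=
            norm_add_le _ _
        _ ≤ θ * ‖lam (k + 1) i - lamS i‖ + C * ‖lam k i - lamS i‖ := by
            gcongr
            exact le_trans (G.le_opNorm _)
              (mul_le_mul_of_nonneg_right hθ (norm_nonneg _))
            exact (F - G).le_opNorm _
        _ ≤ θ * ((∑ j ∈ Finset.range i, θ ^ j) * C * E k) + C * E k := by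
            gcongr
            exact ih hi'
        _ = (∑ j ∈ Finset.range (i + 1), θ ^ j) * C * E k := by
            rw [geom_sum_succ]
            ring
  have hcontr : ∀ k, E (k + 1) ≤ α * E k := by
    intro k
    apply ciSup_le
    intro i
    have hi : (i : ℕ) ≤ p := Nat.lt_succ_iff.mp i.isLt
    calc ‖lam (k + 1) (i : ℕ) - lamS (i : ℕ)‖
        ≤ (∑ j ∈ Finset.range (i : ℕ), θ ^ j) * C * E k := hstep k i hi
      _ ≤ (∑ j ∈ Finset.range p, θ ^ j) * C * E k :=
          mul_le_mul_of_nonneg_right (mul_le_mul_of_nonneg_right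
            (Finset.sum_le_sum_of_subset_of_nonneg
              (Finset.range_subset_range.mpr hi) (fun j _ _ => pow_nonneg hθ0 j)) hC0) (hE0 k)
      _ = α * E k := by rw [hαS]
  intro k
  induction k with
  | zero => simp
  | succ n ih =>
    calc E (n + 1) ≤ α * E n := hcontr n
      _ ≤ α * (α ^ n * E 0) := mul_le_mul_of_nonneg_left ih hα0
      _ = α ^ (n + 1) * E 0 := by ring
end

section
/- The linear Parareal scheme converges (in maximum norm over all time subdomains) whenever ‖𝒢‖ < 1 and ‖𝒢‖ + ‖ℱ - 𝒢‖ < 1 + ‖𝒢‖^p ‖ℱ - 𝒢‖. -/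
/-- Convergence of the linear Parareal scheme (in maximum norm over all time
subdomains, i.e. componentwise) whenever `‖G‖ < 1` and
`‖G‖ + ‖F - G‖ < 1 + ‖G‖^p ‖F - G‖`. -/
theorem stmt3 {X : Type*} [NormedAddCommGroup X] [NormedSpace ℝ X]
    (G F : X →L[ℝ] X) (ζ : X) (p : ℕ)
    (lam : ℕ → ℕ → X) (lamS : ℕ → X)
    (h0 : ∀ k, lam (k + 1) 0 = lam k 0)
    (hrec : ∀ k, ∀ i, 1 ≤ i → i ≤ p →
      lam (k + 1) i = G (lam (k + 1) (i - 1)) + (F - G) (lam k (i - 1)) + ζ)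
    (hS0 : lamS 0 = lam 0 0)
    (hSrec : ∀ i, 1 ≤ i → i ≤ p → lamS i = F (lamS (i - 1)) + ζ)
    (hG : ‖G‖ < 1)
    (hcond : ‖G‖ + ‖F - G‖ < 1 + ‖G‖ ^ p * ‖F - G‖) :
    ∀ i ≤ p, Filter.Tendsto (fun k => lam k i) Filter.atTop (nhds (lamS i)) := by
  set S : ℝ := ∑ j ∈ Finset.range p, ‖G‖ ^ j with hS
  set α : ℝ := S * ‖F - G‖ with hα
  have hGnn : (0:ℝ) ≤ ‖G‖ := norm_nonneg _
  have hSnn : 0 ≤ S := Finset.sum_nonneg fun j _ => pow_nonneg hGnn j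
  have hαnn : 0 ≤ α := mul_nonneg hSnn (norm_nonneg _)
  have hG1 : (1:ℝ) - ‖G‖ > 0 := by linarith
  have hSeq : S * (1 - ‖G‖) = 1 - ‖G‖ ^ p := by
    have hne : ‖G‖ - 1 ≠ 0 := by linarith
    rw [hS, geom_sum_eq (ne_of_lt hG), div_mul_eq_mul_div, div_eq_iff hne]
    ring
  have hα1 : α < 1 := by
    have h1 : ‖F - G‖ * (1 - ‖G‖ ^ p) < 1 - ‖G‖ := by linarith
    rw [← hSeq] at h1
    nlinarith
  -- error at time 0 is 0
  have hE0 : ∀ k, lam k 0 = lamS 0 := by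
    intro k
    induction k with
    | zero => rw [hS0]
    | succ k ih => rw [h0 k, ih]
  set C : ℝ := ∑ i ∈ Finset.range (p + 1), ‖lam 0 i - lamS i‖ with hC
  have hCnn : 0 ≤ C := Finset.sum_nonneg fun i _ => norm_nonneg _
  -- error recursion
  have herec : ∀ k, ∀ j, j + 1 ≤ p →
      lam (k + 1) (j + 1) - lamS (j + 1)
        = G (lam (k + 1) j - lamS j) + (F - G) (lam k j - lamS j) := by
    intro k j hj
    have h1 := hrec k (j + 1) (Nat.le_add_left 1 j) hj
    have h2 := hSrec (j + 1) (Nat.le_add_left 1 j) hj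
    simp only [Nat.add_sub_cancel] at h1 h2
    have hF : F (lamS j) = G (lamS j) + (F - G) (lamS j) := by
      simp [ContinuousLinearMap.sub_apply]
    rw [h1, h2, hF, map_sub, map_sub]
    abel
  -- key bound
  have key : ∀ k, ∀ i ≤ p, ‖lam k i - lamS i‖ ≤ α ^ k * C := by
    intro k
    induction k with
    | zero =>
      intro i hi
      simpa using Finset.single_le_sum (f := fun i => ‖lam 0 i - lamS i‖)
        (fun j _ => norm_nonneg _) (Finset.mem_range.mpr (Nat.lt_succ_of_le hi))
    | succ k ih =>
      have inner : ∀ i ≤ p, ‖lam (k + 1) i - lamS i‖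
          ≤ (∑ j ∈ Finset.range i, ‖G‖ ^ j) * (‖F - G‖ * (α ^ k * C)) := by
        intro i
        induction i with
        | zero =>
          intro _
          simp [hE0 (k + 1)]
        | succ j ihj =>
          intro hj
          have hj' : j ≤ p := Nat.le_of_succ_le hj
          have hrw := herec k j hj
          have hb1 : ‖G (lam (k + 1) j - lamS j)‖
              ≤ ‖G‖ * ((∑ m ∈ Finset.range j, ‖G‖ ^ m) * (‖F - G‖ * (α ^ k * C))) :=
            le_trans (G.le_opNorm _) (by
              exact mul_le_mul_of_nonneg_left (ihj hj') hGnn)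
          have hb2 : ‖(F - G) (lam k j - lamS j)‖ ≤ ‖F - G‖ * (α ^ k * C) :=
            le_trans ((F - G).le_opNorm _)
              (mul_le_mul_of_nonneg_left (ih j hj') (norm_nonneg _))
          have hsum : ∑ m ∈ Finset.range (j + 1), ‖G‖ ^ m
              = ‖G‖ * ∑ m ∈ Finset.range j, ‖G‖ ^ m + 1 := by
            rw [Finset.sum_range_succ', Finset.mul_sum]
            simp [pow_succ, mul_comm]
          calc ‖lam (k + 1) (j + 1) - lamS (j + 1)‖
              ≤ ‖G (lam (k + 1) j - lamS j)‖ + ‖(F - G) (lam k j - lamS j)‖ := by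
                rw [hrw]; exact norm_add_le _ _
            _ ≤ ‖G‖ * ((∑ m ∈ Finset.range j, ‖G‖ ^ m) * (‖F - G‖ * (α ^ k * C)))
                + ‖F - G‖ * (α ^ k * C) := add_le_add hb1 hb2
            _ = (∑ m ∈ Finset.range (j + 1), ‖G‖ ^ m) * (‖F - G‖ * (α ^ k * C)) := by
                rw [hsum]; ring
      intro i hi
      have hsle : (∑ j ∈ Finset.range i, ‖G‖ ^ j) ≤ S := by
        apply Finset.sum_le_sum_of_subset_of_nonneg
        · exact Finset.range_subset_range.mpr hi
        · intro j _ _; exact pow_nonneg hGnn j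
      have hnn : 0 ≤ ‖F - G‖ * (α ^ k * C) :=
        mul_nonneg (norm_nonneg _) (mul_nonneg (pow_nonneg hαnn k) hCnn)
      calc ‖lam (k + 1) i - lamS i‖
          ≤ (∑ j ∈ Finset.range i, ‖G‖ ^ j) * (‖F - G‖ * (α ^ k * C)) := inner i hi
        _ ≤ S * (‖F - G‖ * (α ^ k * C)) := mul_le_mul_of_nonneg_right hsle hnn
        _ = α ^ (k + 1) * C := by rw [hα]; ring
  intro i hi
  rw [tendsto_iff_norm_sub_tendsto_zero]
  have hlim : Filter.Tendsto (fun k => α ^ k * C) Filter.atTop (nhds 0) := by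
    have := (tendsto_pow_atTop_nhds_zero_of_lt_one hαnn hα1).mul_const C
    simpa using this
  exact squeeze_zero (fun k => norm_nonneg _) (fun k => key k i hi) hlim
end

section
/- Speedup bound for asynchronous over synchronous distributed Parareal: with synchronous cost C^(k) = p·C_G + k(C_F + C_G + (p-1-(k+1)/2)·C̄) and asynchronous cost C̃ = p·C_G + κ·(C_F + C_G) where κ ≥ k ≥ 1 and p ≥ 2, the ratio satisfies C^(k)/C̃ ≤ 1 + (p-2)·C̄/(C_F + C_G). -/
/-- Speedup bound of asynchronous over synchronous distributed Parareal:
`C^(k)/C̃ ≤ 1 + (p - 2)·C̄/(C_F + C_G)`. -/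
theorem stmt15 (CF CG Cbar : ℝ) (hCF : 0 < CF) (hCG : 0 < CG) (hCbar : 0 ≤ Cbar)
    (p k κ : ℕ) (hp : 2 ≤ p) (hk : 1 ≤ k) (hkκ : k ≤ κ) (hκp : κ ≤ p) :
    ((p : ℝ) * CG + k * (CF + CG + ((p : ℝ) - 1 - (k + 1) / 2) * Cbar)) /
        ((p : ℝ) * CG + κ * (CF + CG)) ≤
      1 + ((p : ℝ) - 2) * Cbar / (CF + CG) := by
  have hs : (0:ℝ) < CF + CG := by linarith
  have hp' : (2:ℝ) ≤ (p:ℝ) := by exact_mod_cast hp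
  have hk' : (1:ℝ) ≤ (k:ℝ) := by exact_mod_cast hk
  have hkκ' : (k:ℝ) ≤ (κ:ℝ) := by exact_mod_cast hkκ
  have hD : (0:ℝ) < (p:ℝ) * CG + κ * (CF + CG) := by positivity
  rw [div_le_iff₀ hD]
  have hq : (0:ℝ) ≤ ((p:ℝ) - 2) * Cbar / (CF + CG) := div_nonneg (mul_nonneg (by linarith) hCbar) hs.le
  have key : (κ:ℝ) * (((p:ℝ) - 2) * Cbar) ≤
      ((p:ℝ) - 2) * Cbar / (CF + CG) * ((p:ℝ) * CG + κ * (CF + CG)) := by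
    have h1 : (κ:ℝ) * (CF + CG) ≤ (p:ℝ) * CG + κ * (CF + CG) := by nlinarith
    calc (κ:ℝ) * (((p:ℝ) - 2) * Cbar)
        = ((p:ℝ) - 2) * Cbar / (CF + CG) * ((κ:ℝ) * (CF + CG)) := by
          field_simp
      _ ≤ _ := by exact mul_le_mul_of_nonneg_left h1 hq
  nlinarith [mul_nonneg hCbar (mul_nonneg (sub_nonneg.2 hk') (by linarith : (0:ℝ) ≤ (k:ℝ))),
    mul_nonneg hCbar (mul_nonneg (sub_nonneg.2 hkκ') (by linarith : (0:ℝ) ≤ (p:ℝ) - 2)),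
    mul_le_mul_of_nonneg_left hkκ' (le_of_lt hs)]
end
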